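/- Let y₁ ≤ y₂ ≤ ... ≤ y₂ₙ be an even number of sorted real values and y₀ a real number with y₀ ≠ yᵢ for all i. Then there exists k ∈ {1,...,n} with y₂ₖ₋₁ < y₀ < y₂ₖ if and only if the number of indices i with yᵢ < y₀ is odd. -/
import Mathlib

lemma downclosed_eq_range (S : Finset ℕ)
    (hdc : ∀ j i, j ≤ i → i ∈ S → j ∈ S) : S = Finset.range S.card := by
  have hsub : Finset.range S.card ⊆ S := by
    intro i hi
    rw [Finset.mem_range] at hi
    by_contra hiS
    have hSr : S ⊆ Finset.range i := by
      intro j hj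
      rw [Finset.mem_range]
      by_contra hj'
      exact hiS (hdc i j (le_of_not_gt hj') hj)
    have := Finset.card_le_card hSr
    simp at this
    omega
  exact (Finset.eq_of_subset_of_card_le hsub (by simp)).symm

theorem enclosing_pair_iff_odd_count (n : ℕ) (y : ℕ → ℝ)
    (hmono : ∀ i j, i ≤ j → j < 2 * n → y i ≤ y j) (y₀ : ℝ)
    (hne : ∀ i < 2 * n, y₀ ≠ y i) :
    (∃ k < n, y (2 * k) < y₀ ∧ y₀ < y (2 * k + 1)) ↔
      Odd ((Finset.range (2 * n)).filter (fun i => y i < y₀)).card := by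
  set S := (Finset.range (2 * n)).filter (fun i => y i < y₀) with hS
  have hdc : ∀ j i, j ≤ i → i ∈ S → j ∈ S := by
    intro j i hji hi
    rw [hS, Finset.mem_filter, Finset.mem_range] at hi ⊢
    exact ⟨lt_of_le_of_lt hji hi.1, lt_of_le_of_lt (hmono j i hji hi.1) hi.2⟩
  have hrange := downclosed_eq_range S hdc
  have hcle : S.card ≤ 2 * n := by
    calc S.card ≤ (Finset.range (2 * n)).card := Finset.card_le_card (Finset.filter_subset _ _)
    _ = 2 * n := Finset.card_range _
  constructor
  · rintro ⟨k, hk, h1, h2⟩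
    have hmem : 2 * k ∈ S := by
      rw [hS, Finset.mem_filter, Finset.mem_range]
      exact ⟨by omega, h1⟩
    have hnmem : 2 * k + 1 ∉ S := by
      rw [hS, Finset.mem_filter]
      rintro ⟨-, h⟩
      exact absurd h (not_lt.2 h2.le)
    rw [hrange, Finset.mem_range] at hmem hnmem
    have : S.card = 2 * k + 1 := by omega
    exact ⟨k, by omega⟩
  · rintro ⟨k, hk⟩
    have hk2 : 2 * k + 1 ≤ 2 * n := by omega
    refine ⟨k, by omega, ?_, ?_⟩
    · have : 2 * k ∈ S := by
        rw [hrange, Finset.mem_range]; omega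
      rw [hS, Finset.mem_filter] at this
      exact this.2
    · have hnmem : 2 * k + 1 ∉ S := by
        rw [hrange, Finset.mem_range]; omega
      rw [hS, Finset.mem_filter, Finset.mem_range] at hnmem
      push_neg at hnmem
      have h21 : 2 * k + 1 < 2 * n := by
        rcases Nat.lt_or_ge (2 * k + 1) (2 * n) with h | h
        · exact h
        · omega
      exact lt_of_le_of_ne (hnmem h21) (hne _ h21)
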